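/- Two-dimensional Minkowski spacetime ℝ²₁ is regular: if p ≤ q, p ≠ q, and τ(p,q) = 0 (p and q are null related), then the straight segment from p to q is the unique maximizer from p to q and it is a null curve; consequently if a maximizer from x to z has τ(x,z) > 0 then x ≪ z via a timelike straight segment. In particular, if x ≪ y, y ≤ z, τ(y,z) = 0 and y ≠ z, then τ(x,y) < τ(x,z). -/

import Mathlib

/-!
Every point of a causal curve from `p` to a null-related `q` is, by the reverse triangle
inequality, null-related to both endpoints; no two of its points are then timelike related.
In `ℝ²₁` two future null vectors with null sum are parallel, so such a point lies on the
segment `[p, q]`. If instead `τ(x, z) > 0`, then `x ≪ z` and the straight segment is timelike.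
Finally, for `x ≪ y` and `z - y` nonzero future null, the Minkowski product of `y - x` and
`z - y` is negative, which makes the interval from `x` to `z` strictly larger.
-/

open Set

/-- A Lorentzian pre-length space: a set `X` with an extended time separation
function `ell : X × X → {-∞} ∪ [0,∞]` (modelled as `EReal` whose values are either
`⊥ = -∞` or nonnegative) satisfying the reverse triangle inequality (with the
convention `-∞ + ∞ = -∞`, which is `EReal` addition) and `ell x x ≥ 0`. -/
structure LPLS (X : Type*) where
  ell : X → X → EReal
  range_cond : ∀ x y, ell x y = ⊥ ∨ 0 ≤ ell x y
  rev_tri : ∀ x y z, ell x y + ell y z ≤ ell x z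
  refl_nonneg : ∀ x, 0 ≤ ell x x

namespace LPLS

variable {X : Type*}

/-- The causal relation `x ≤ y` iff `ℓ(x,y) ≥ 0`. -/
def causal (L : LPLS X) (x y : X) : Prop := 0 ≤ L.ell x y

/-- The chronological (timelike) relation `x ≪ y` iff `ℓ(x,y) > 0`. -/
def chron (L : LPLS X) (x y : X) : Prop := 0 < L.ell x y

/-- The time separation function `τ = max(0, ℓ)`. -/
noncomputable def tau (L : LPLS X) (x y : X) : EReal := max 0 (L.ell x y)

/-- The chronological future `I⁺(x)`. -/
def Iplus (L : LPLS X) (x : X) : Set X := {z | L.chron x z}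

/-- The chronological past `I⁻(x)`. -/
def Iminus (L : LPLS X) (x : X) : Set X := {z | L.chron z x}

/-- A causal curve on `[a,b]`: continuous and totally ordered by `≤`. -/
def IsCausalCurve [TopologicalSpace X] (L : LPLS X) (γ : ℝ → X) (a b : ℝ) : Prop :=
  a ≤ b ∧ ContinuousOn γ (Icc a b) ∧
    ∀ ⦃s t : ℝ⦄, s ∈ Icc a b → t ∈ Icc a b → s < t → L.causal (γ s) (γ t)

/-- A timelike curve on `[a,b]`: continuous and totally ordered by `≪`. -/
def IsTimelikeCurve [TopologicalSpace X] (L : LPLS X) (γ : ℝ → X) (a b : ℝ) : Prop :=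
  a ≤ b ∧ ContinuousOn γ (Icc a b) ∧
    ∀ ⦃s t : ℝ⦄, s ∈ Icc a b → t ∈ Icc a b → s < t → L.chron (γ s) (γ t)

/-- A curve is null on `[a,b]` if no two of its points are chronologically related. -/
def IsNullOn (L : LPLS X) (γ : ℝ → X) (a b : ℝ) : Prop :=
  ∀ ⦃s t : ℝ⦄, s ∈ Icc a b → t ∈ Icc a b → s < t → ¬ L.chron (γ s) (γ t)

/-- The `τ`-length of a curve on `[a,b]`:
`L_τ(γ) = inf { Σ τ(γ(t_{i-1}), γ(t_i)) : a = t₀ < t₁ < … < t_N = b }`. -/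
noncomputable def len (L : LPLS X) (γ : ℝ → X) (a b : ℝ) : EReal :=
  ⨅ (N : ℕ) (t : Fin (N + 1) → ℝ) (_ : StrictMono t) (_ : t 0 = a)
      (_ : t (Fin.last N) = b),
    ∑ i : Fin N, L.tau (γ (t i.castSucc)) (γ (t i.succ))

/-- A (causal) maximizer: a causal curve whose length realizes the time separation
of its endpoints. -/
def IsMaximizer [TopologicalSpace X] (L : LPLS X) (γ : ℝ → X) (a b : ℝ) : Prop :=
  L.IsCausalCurve γ a b ∧ L.len γ a b = L.tau (γ a) (γ b)

/-- Regularity: every causal maximizer is either timelike or null. -/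
def Regular [TopologicalSpace X] (L : LPLS X) : Prop :=
  ∀ (γ : ℝ → X) (a b : ℝ), a < b → L.IsMaximizer γ a b →
    L.IsTimelikeCurve γ a b ∨ L.IsNullOn γ a b

/-- The topology is finer than the chronological topology: all `I±(x)` are open. -/
def ChronOpen [TopologicalSpace X] (L : LPLS X) : Prop :=
  ∀ x : X, IsOpen (L.Iplus x) ∧ IsOpen (L.Iminus x)

/-- Locally distinguishing: distinct points are distinguished by their futures or
pasts within every common neighbourhood. -/
def LocallyDistinguishing [TopologicalSpace X] (L : LPLS X) : Prop :=
  ∀ ⦃x y : X⦄, x ≠ y → ∀ U : Set X, U ∈ nhds x → U ∈ nhds y →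
    L.Iplus x ∩ U ≠ L.Iplus y ∩ U ∨ L.Iminus x ∩ U ≠ L.Iminus y ∩ U

/-- Not locally timelike isolating: every neighbourhood of every point meets its
chronological future and past. -/
def NotLocallyIsolating [TopologicalSpace X] (L : LPLS X) : Prop :=
  ∀ x : X, ∀ U ∈ nhds x, (L.Iplus x ∩ U).Nonempty ∧ (L.Iminus x ∩ U).Nonempty

/-- The push-up property. -/
def PushUp (L : LPLS X) : Prop :=
  (∀ ⦃x y z : X⦄, L.chron x y → L.causal y z → L.chron x z) ∧
  (∀ ⦃x y z : X⦄, L.causal x y → L.chron y z → L.chron x z)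

end LPLS

/-- The causal relation of two-dimensional Minkowski spacetime `ℝ²₁` (with
bilinear form `-t₁t₂ + x₁x₂`): `p ≤ q` iff `Δt ≥ 0` and `Δt² ≥ Δx²`. -/
def mcausal (p q : ℝ × ℝ) : Prop :=
  0 ≤ q.1 - p.1 ∧ (q.2 - p.2) ^ 2 ≤ (q.1 - p.1) ^ 2

/-- The chronological relation of `ℝ²₁`: `p ≪ q` iff `Δt > 0` and `Δt² > Δx²`. -/
def mchron (p q : ℝ × ℝ) : Prop :=
  0 < q.1 - p.1 ∧ (q.2 - p.2) ^ 2 < (q.1 - p.1) ^ 2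

open Classical in
/-- The time separation of `ℝ²₁`: `τ(p,q) = √(Δt² - Δx²)` for `p ≤ q`, else `0`. -/
noncomputable def mtau (p q : ℝ × ℝ) : ℝ :=
  if mcausal p q then Real.sqrt ((q.1 - p.1) ^ 2 - (q.2 - p.2) ^ 2) else 0

open Classical in
/-- The extended time separation of `ℝ²₁` as an `EReal`-valued function. -/
noncomputable def mell (p q : ℝ × ℝ) : EReal :=
  if mcausal p q then ((Real.sqrt ((q.1 - p.1) ^ 2 - (q.2 - p.2) ^ 2) : ℝ) : EReal) else ⊥


namespace LPLS

variable {X : Type*} (L : LPLS X)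

theorem len_nonneg (γ : ℝ → X) (a b : ℝ) : 0 ≤ L.len γ a b :=
  le_iInf fun _ => le_iInf fun _ => le_iInf fun _ => le_iInf fun _ => le_iInf fun _ =>
    Finset.sum_nonneg fun _ _ => le_max_left _ _

theorem len_le_tau (γ : ℝ → X) {a b : ℝ} (hab : a < b) : L.len γ a b ≤ L.tau (γ a) (γ b) := by
  have hmono : StrictMono ![a, b] := by
    rw [Fin.strictMono_iff_lt_succ]
    intro i
    fin_cases i
    simpa using hab
  refine iInf₂_le_of_le 1 ![a, b] <| iInf₂_le_of_le hmono rfl <| iInf_le_of_le rfl ?_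
  simp

theorem tau_eq_zero_of_ell_eq_zero {x y : X} (h : L.ell x y = 0) : L.tau x y = 0 := by
  simp [tau, h]

theorem chron_of_tau_pos {x y : X} (h : 0 < L.tau x y) : L.chron x y :=
  (lt_max_iff.mp h).resolve_left (lt_irrefl 0)

theorem ell_eq_zero_of_causal_of_causal {x y z : X} (hxz : L.ell x z = 0)
    (hxy : L.causal x y) (hyz : L.causal y z) : L.ell x y = 0 ∧ L.ell y z = 0 :=
  (add_eq_zero_iff_of_nonneg hxy hyz).1 <|
    le_antisymm (hxz ▸ L.rev_tri x y z) (add_nonneg hxy hyz)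

variable {L} [TopologicalSpace X] {γ : ℝ → X} {a b : ℝ}

theorem IsCausalCurve.causal_left (hγ : L.IsCausalCurve γ a b) {s : ℝ} (hs : s ∈ Icc a b) :
    L.causal (γ a) (γ s) := by
  rcases hs.1.eq_or_lt with rfl | h
  · exact L.refl_nonneg _
  · exact hγ.2.2 (left_mem_Icc.2 hγ.1) hs h

theorem IsCausalCurve.causal_right (hγ : L.IsCausalCurve γ a b) {s : ℝ} (hs : s ∈ Icc a b) :
    L.causal (γ s) (γ b) := by
  rcases hs.2.eq_or_lt with rfl | h
  · exact L.refl_nonneg _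
  · exact hγ.2.2 hs (right_mem_Icc.2 hγ.1) h

theorem IsCausalCurve.ell_eq_zero (hγ : L.IsCausalCurve γ a b) (h0 : L.ell (γ a) (γ b) = 0)
    {s : ℝ} (hs : s ∈ Icc a b) : L.ell (γ a) (γ s) = 0 ∧ L.ell (γ s) (γ b) = 0 :=
  L.ell_eq_zero_of_causal_of_causal h0 (hγ.causal_left hs) (hγ.causal_right hs)

theorem IsCausalCurve.isNullOn (hγ : L.IsCausalCurve γ a b) (h0 : L.ell (γ a) (γ b) = 0) :
    L.IsNullOn γ a b := fun _ _ hs ht hst hchron =>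
  hchron.ne' (L.ell_eq_zero_of_causal_of_causal (hγ.ell_eq_zero h0 ht).1
    (hγ.causal_left hs) (hγ.2.2 hs ht hst)).2

theorem IsCausalCurve.isMaximizer (hγ : L.IsCausalCurve γ a b) (hab : a < b)
    (h0 : L.ell (γ a) (γ b) = 0) : L.IsMaximizer γ a b := by
  refine ⟨hγ, le_antisymm (L.len_le_tau γ hab) ?_⟩
  rw [L.tau_eq_zero_of_ell_eq_zero h0]
  exact L.len_nonneg γ a b

end LPLS

section Minkowski

variable {p q : ℝ × ℝ}

theorem mcausal_of_mchron (h : mchron p q) : mcausal p q := ⟨h.1.le, h.2.le⟩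

theorem mtau_of_mcausal (h : mcausal p q) :
    mtau p q = Real.sqrt ((q.1 - p.1) ^ 2 - (q.2 - p.2) ^ 2) := if_pos h

theorem mell_of_mcausal (h : mcausal p q) : mell p q = mtau p q := by
  simp [mell, mtau, h]

theorem mtau_eq_zero_iff (h : mcausal p q) :
    mtau p q = 0 ↔ (q.2 - p.2) ^ 2 = (q.1 - p.1) ^ 2 := by
  rw [mtau_of_mcausal h, Real.sqrt_eq_zero', sub_nonpos]
  exact ⟨fun h' => le_antisymm h.2 h', ge_of_eq⟩

theorem mtau_pos_iff (h : mcausal p q) : 0 < mtau p q ↔ mchron p q := by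
  rw [mtau_of_mcausal h, Real.sqrt_pos, sub_pos]
  refine ⟨fun h' => ⟨lt_of_le_of_ne h.1 fun h0 => ?_, h'⟩, And.right⟩
  rw [← h0] at h'
  nlinarith [sq_nonneg (q.2 - p.2)]

theorem mell_nonneg_iff : 0 ≤ mell p q ↔ mcausal p q := by
  by_cases h : mcausal p q
  · simp [mell_of_mcausal h, h, mtau, Real.sqrt_nonneg]
  · simp [mell, h]

theorem mell_pos_iff : 0 < mell p q ↔ mchron p q := by
  by_cases h : mcausal p q
  · rw [mell_of_mcausal h, EReal.coe_pos, mtau_pos_iff h]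
  · simp only [mell, h, if_false, not_lt_bot, false_iff]
    exact fun h' => h (mcausal_of_mchron h')

theorem mell_eq_zero_iff :
    mell p q = 0 ↔ mcausal p q ∧ (q.2 - p.2) ^ 2 = (q.1 - p.1) ^ 2 := by
  by_cases h : mcausal p q
  · rw [mell_of_mcausal h, EReal.coe_eq_zero, mtau_eq_zero_iff h]
    exact (and_iff_right h).symm
  · simp [mell, h]

theorem sub_fst_pos_of_null (h : mcausal p q) (hnull : (q.2 - p.2) ^ 2 = (q.1 - p.1) ^ 2)
    (hne : p ≠ q) : 0 < q.1 - p.1 := by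
  refine h.1.lt_of_ne fun h0 => hne (Prod.ext ?_ ?_)
  · linarith
  · rw [← h0, sq_eq_zero_iff.mpr rfl, sq_eq_zero_iff] at hnull
    linarith

theorem segment_sub_segment (s t : ℝ) :
    (p + t • (q - p)).1 - (p + s • (q - p)).1 = (t - s) * (q.1 - p.1) ∧
      (p + t • (q - p)).2 - (p + s • (q - p)).2 = (t - s) * (q.2 - p.2) := by
  constructor <;> simp only [Prod.fst_add, Prod.snd_add, Prod.smul_fst, Prod.smul_snd,
    Prod.fst_sub, Prod.snd_sub, smul_eq_mul] <;> ring

theorem mcausal_segment (h : mcausal p q) {s t : ℝ} (hst : s ≤ t) :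
    mcausal (p + s • (q - p)) (p + t • (q - p)) := by
  obtain ⟨h1, h2⟩ := segment_sub_segment (p := p) (q := q) s t
  rw [mcausal, h1, h2, mul_pow, mul_pow]
  exact ⟨mul_nonneg (sub_nonneg.2 hst) h.1, mul_le_mul_of_nonneg_left h.2 (sq_nonneg _)⟩

theorem mchron_segment (h : mchron p q) {s t : ℝ} (hst : s < t) :
    mchron (p + s • (q - p)) (p + t • (q - p)) := by
  obtain ⟨h1, h2⟩ := segment_sub_segment (p := p) (q := q) s t
  rw [mchron, h1, h2, mul_pow, mul_pow]
  exact ⟨mul_pos (sub_pos.2 hst) h.1, mul_lt_mul_of_pos_left h.2 (by nlinarith)⟩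

/-- Two null vectors `(A, B)` and `(C, D)` with null sum are parallel. -/
theorem mul_eq_mul_of_null_of_null_add {A B C D : ℝ} (h₁ : B ^ 2 = A ^ 2) (h₂ : D ^ 2 = C ^ 2)
    (h₃ : (B + D) ^ 2 = (A + C) ^ 2) : A * D = B * C := by
  have hAC : A * C = B * D := by linear_combination (h₁ + h₂ - h₃) / 2
  have hsq : (A * D - B * C) ^ 2 = 0 := by
    linear_combination (-(D ^ 2)) * h₁ - B ^ 2 * h₂ - 2 * B * D * hAC
  linarith [pow_eq_zero_iff (n := 2) two_ne_zero |>.mp hsq]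

theorem exists_eq_segment_of_null {m : ℝ × ℝ} (hpm : mell p m = 0) (hmq : mell m q = 0)
    (hpq : mell p q = 0) (hne : p ≠ q) : ∃ u ∈ Icc (0 : ℝ) 1, m = p + u • (q - p) := by
  rw [mell_eq_zero_iff] at hpm hmq hpq
  have hpos := sub_fst_pos_of_null hpq.1 hpq.2 hne
  have hpar := mul_eq_mul_of_null_of_null_add hpm.2 hmq.2 (by linear_combination hpq.2)
  refine ⟨(m.1 - p.1) / (q.1 - p.1),
    ⟨div_nonneg hpm.1.1 hpos.le, (div_le_one hpos).2 (by linarith [hmq.1.1])⟩, Prod.ext ?_ ?_⟩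
  · simp only [Prod.fst_add, Prod.smul_fst, Prod.fst_sub, smul_eq_mul]
    field_simp
    ring
  · simp only [Prod.snd_add, Prod.smul_snd, Prod.snd_sub, smul_eq_mul]
    field_simp
    linear_combination -hpar

theorem mtau_lt_mtau_of_mchron_of_null {x y z : ℝ × ℝ} (hxy : mchron x y) (hyz : mcausal y z)
    (hnull : (z.2 - y.2) ^ 2 = (z.1 - y.1) ^ 2) (hne : y ≠ z) : mtau x y < mtau x z := by
  have hc := sub_fst_pos_of_null hyz hnull hne
  -- the Minkowski product of the timelike `y - x` with the nonzero null `z - y` is negative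
  have hdot : (y.2 - x.2) * (z.2 - y.2) < (y.1 - x.1) * (z.1 - y.1) := by
    have hD : |z.2 - y.2| = z.1 - y.1 := by
      rw [← abs_of_pos hc]
      exact (sq_eq_sq_iff_abs_eq_abs _ _).1 hnull
    have hB : |y.2 - x.2| < y.1 - x.1 := abs_lt_of_sq_lt_sq hxy.2 hxy.1.le
    calc (y.2 - x.2) * (z.2 - y.2) ≤ |y.2 - x.2| * |z.2 - y.2| := by rw [← abs_mul]; exact le_abs_self _
      _ < (y.1 - x.1) * (z.1 - y.1) := by rw [hD]; exact mul_lt_mul_of_pos_right hB hc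
  have hxz : mcausal x z := ⟨by linarith [hxy.1], by nlinarith [hxy.2]⟩
  rw [mtau_of_mcausal (mcausal_of_mchron hxy), mtau_of_mcausal hxz]
  exact Real.sqrt_lt_sqrt (by nlinarith [hxy.2]) (by nlinarith)

end Minkowski

/-- `ℝ²₁` is regular.  (a) If `p ≤ q`, `p ≠ q` and `τ(p,q) = 0`
(null related) then the straight segment from `p` to `q` is a null maximizer and
any maximizer from `p` to `q` runs along this segment and is null (uniqueness).
(b) Consequently a maximizer from `x` to `z` with `τ(x,z) > 0` gives `x ≪ z`
via a timelike straight segment.  (c) In particular, if `x ≪ y`, `y ≤ z`,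
`τ(y,z) = 0` and `y ≠ z`, then `τ(x,y) < τ(x,z)`. -/
theorem stmt8 (L : LPLS (ℝ × ℝ)) (hL : ∀ p q, L.ell p q = mell p q) :
    (∀ p q : ℝ × ℝ, mcausal p q → p ≠ q → mtau p q = 0 →
      (L.IsMaximizer (fun s => p + s • (q - p)) 0 1 ∧
        L.IsNullOn (fun s => p + s • (q - p)) 0 1) ∧
      (∀ γ : ℝ → ℝ × ℝ, L.IsMaximizer γ 0 1 → γ 0 = p → γ 1 = q →
        (∀ s ∈ Set.Icc (0:ℝ) 1, ∃ u ∈ Set.Icc (0:ℝ) 1, γ s = p + u • (q - p)) ∧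
        L.IsNullOn γ 0 1)) ∧
    (∀ x z : ℝ × ℝ, ∀ γ : ℝ → ℝ × ℝ, L.IsMaximizer γ 0 1 → γ 0 = x → γ 1 = z →
      0 < L.tau x z → mchron x z ∧
        ∀ s t : ℝ, 0 ≤ s → s < t → t ≤ 1 →
          mchron (x + s • (z - x)) (x + t • (z - x))) ∧
    (∀ x y z : ℝ × ℝ, mchron x y → mcausal y z → mtau y z = 0 → y ≠ z →
      mtau x y < mtau x z) := by
  refine ⟨fun p q hpq hne h0 => ?_, fun x z _ _ _ _ hτ => ?_,
    fun x y z hxy hyz h0 hne => mtau_lt_mtau_of_mchron_of_null hxy hyz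
      ((mtau_eq_zero_iff hyz).1 h0) hne⟩
  · have hell : L.ell p q = 0 := by rw [hL, mell_of_mcausal hpq, h0, EReal.coe_zero]
    have hseg : L.IsCausalCurve (fun s => p + s • (q - p)) 0 1 :=
      ⟨zero_le_one, by fun_prop, fun s t _ _ hst => by
        rw [LPLS.causal, hL, mell_nonneg_iff]; exact mcausal_segment hpq hst.le⟩
    have hseg01 : L.ell (p + (0 : ℝ) • (q - p)) (p + (1 : ℝ) • (q - p)) = 0 := by simpa using hell
    refine ⟨⟨hseg.isMaximizer zero_lt_one hseg01, hseg.isNullOn hseg01⟩,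
      fun γ hγ hγ0 hγ1 => ?_⟩
    have hγell : L.ell (γ 0) (γ 1) = 0 := by rwa [hγ0, hγ1]
    refine ⟨fun s hs => ?_, hγ.1.isNullOn hγell⟩
    obtain ⟨hps, hsq⟩ := hγ.1.ell_eq_zero hγell hs
    rw [hγ0, hL] at hps
    rw [hγ1, hL] at hsq
    exact exists_eq_segment_of_null hps hsq (by rwa [← hL]) hne
  · have hxz : mchron x z := by
      rw [← mell_pos_iff, ← hL]; exact L.chron_of_tau_pos hτ
    exact ⟨hxz, fun s t _ hst _ => mchron_segment hxz hst⟩
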